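/- arXiv:2007.13445 — 5 statements merged into one kernel-verified Lean document; each statement's English description precedes it below -/
import Mathlib

section
/- Let (V, Ω) be a symplectic 𝔤-module of convex type, i.e. there exists y ∈ 𝔤 such that the Hamiltonian function v ↦ Ω(y.v, v) is positive definite on V. Then every X ∈ End_𝔤(V) with X^# = -X (equivalently, X ∈ End_𝔤(V) ∩ 𝔰𝔭(V, Ω)) has purely imaginary spectrum, i.e. all complex eigenvalues of X lie in iℝ. -/
/-!
An eigenvector `u + i v` of the complexification of `X` for the eigenvalue `μ = a + i b` gives
`X u = a u - b v` and `X v = b u + a v`. If `A` is a positive definite bilinear form for which `X`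
is skew, i.e. `A (X w) w + A w (X w) = 0`, then adding this identity for `w = u` and `w = v`
makes the `b`-terms cancel and leaves `2 a (A u u + A v v) = 0`, so `a = 0`. In a symplectic
module of convex type, `A w w' := Ω (y.w) w'` is such a form for every `X ∈ End_𝔤(V) ∩ 𝔰𝔭(V, Ω)`.
-/

attribute [local instance 100] LieRing.ofAssociativeRing

open scoped TensorProduct

namespace TensorProduct

variable {V W : Type*} [AddCommGroup V] [Module ℝ V] [AddCommGroup W] [Module ℝ W]

noncomputable def complexRe : ℂ ⊗[ℝ] V →ₗ[ℝ] V :=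
  lift (LinearMap.lsmul ℝ V ∘ₗ Complex.reLm)

noncomputable def complexIm : ℂ ⊗[ℝ] V →ₗ[ℝ] V :=
  lift (LinearMap.lsmul ℝ V ∘ₗ Complex.imLm)

@[simp]
theorem complexRe_tmul (c : ℂ) (v : V) : complexRe (c ⊗ₜ[ℝ] v) = c.re • v := by
  simp [complexRe]

@[simp]
theorem complexIm_tmul (c : ℂ) (v : V) : complexIm (c ⊗ₜ[ℝ] v) = c.im • v := by
  simp [complexIm]

theorem one_tmul_complexRe_add_I_tmul_complexIm (z : ℂ ⊗[ℝ] V) :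
    (1 : ℂ) ⊗ₜ[ℝ] complexRe z + Complex.I ⊗ₜ[ℝ] complexIm z = z := by
  induction z using TensorProduct.induction_on with
  | zero => simp
  | tmul c v =>
    rw [complexRe_tmul, complexIm_tmul, tmul_smul, tmul_smul, smul_tmul', smul_tmul',
      ← add_tmul]
    congr 1
    simp
  | add s t hs ht =>
    rw [map_add, map_add, tmul_add, tmul_add, add_add_add_comm, hs, ht]

theorem complexRe_ne_zero_or_complexIm_ne_zero {z : ℂ ⊗[ℝ] V} (hz : z ≠ 0) :
    complexRe z ≠ 0 ∨ complexIm z ≠ 0 := by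
  by_contra! h
  apply hz
  rw [← one_tmul_complexRe_add_I_tmul_complexIm z, h.1, h.2, tmul_zero, tmul_zero, add_zero]

theorem complexRe_baseChange (f : V →ₗ[ℝ] W) (z : ℂ ⊗[ℝ] V) :
    complexRe (f.baseChange ℂ z) = f (complexRe z) := by
  induction z using TensorProduct.induction_on with
  | zero => simp
  | tmul c v => simp
  | add s t hs ht => simp [hs, ht]

theorem complexIm_baseChange (f : V →ₗ[ℝ] W) (z : ℂ ⊗[ℝ] V) :
    complexIm (f.baseChange ℂ z) = f (complexIm z) := by
  induction z using TensorProduct.induction_on with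
  | zero => simp
  | tmul c v => simp
  | add s t hs ht => simp [hs, ht]

theorem complexRe_smul (μ : ℂ) (z : ℂ ⊗[ℝ] V) :
    complexRe (μ • z) = μ.re • complexRe z - μ.im • complexIm z := by
  induction z using TensorProduct.induction_on with
  | zero => simp
  | tmul c v => simp [smul_tmul', smul_smul, ← sub_smul]
  | add s t hs ht =>
    rw [smul_add, map_add, map_add, map_add, hs, ht]
    module

theorem complexIm_smul (μ : ℂ) (z : ℂ ⊗[ℝ] V) :
    complexIm (μ • z) = μ.im • complexRe z + μ.re • complexIm z := by
  induction z using TensorProduct.induction_on with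
  | zero => simp
  | tmul c v =>
    simp only [smul_tmul', complexIm_tmul, complexRe_tmul, smul_eq_mul, Complex.mul_im,
      smul_smul, ← add_smul]
    ring_nf
  | add s t hs ht =>
    rw [smul_add, map_add, map_add, map_add, hs, ht]
    module

end TensorProduct

open TensorProduct

theorem Module.End.re_eq_zero_of_hasEigenvalue_baseChange {V : Type*} [AddCommGroup V]
    [Module ℝ V] (A : LinearMap.BilinForm ℝ V) (hA : ∀ v : V, v ≠ 0 → 0 < A v v)
    {X : Module.End ℝ V} (hX : ∀ v : V, A (X v) v + A v (X v) = 0) {μ : ℂ}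
    (hμ : Module.End.HasEigenvalue (X.baseChange ℂ) μ) : μ.re = 0 := by
  obtain ⟨z, hz⟩ := hμ.exists_hasEigenvector
  set u := complexRe z
  set v := complexIm z
  have hXu : X u = μ.re • u - μ.im • v := by
    rw [← complexRe_baseChange, hz.apply_eq_smul, complexRe_smul]
  have hXv : X v = μ.im • u + μ.re • v := by
    rw [← complexIm_baseChange, hz.apply_eq_smul, complexIm_smul]
  have hnonneg (w : V) : 0 ≤ A w w := by
    rcases eq_or_ne w 0 with rfl | hw
    · simp
    · exact (hA w hw).le
  have hpos : 0 < A u u + A v v := by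
    rcases complexRe_ne_zero_or_complexIm_ne_zero hz.2 with hu | hv
    · linarith [hA u hu, hnonneg v]
    · linarith [hA v hv, hnonneg u]
  have hkey : 2 * μ.re * (A u u + A v v) = 0 := by
    have hu := hX u
    have hv := hX v
    rw [hXu] at hu
    rw [hXv] at hv
    simp only [map_add, map_sub, map_smul, LinearMap.add_apply, LinearMap.sub_apply,
      LinearMap.smul_apply, smul_eq_mul] at hu hv
    linear_combination hu + hv
  simpa [hpos.ne'] using hkey

theorem sympmodconv_spec_skewsym_end_general
    (V : Type*) [AddCommGroup V] [Module ℝ V] [FiniteDimensional ℝ V]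
    (Ω : LinearMap.BilinForm ℝ V)
    (g : Type*) [LieRing g] [LieAlgebra ℝ g]
    (ρ : g →ₗ⁅ℝ⁆ Module.End ℝ V)
    (hconv : ∃ y : g, ∀ v : V, v ≠ 0 → 0 < Ω (ρ y v) v)
    (X : Module.End ℝ V)
    (hXcomm : ∀ x : g, ρ x ∘ₗ X = X ∘ₗ ρ x)
    (hXskew : ∀ v w : V, Ω (X v) w + Ω v (X w) = 0) :
    ∀ μ ∈ spectrum ℂ (LinearMap.baseChange ℂ (X : V →ₗ[ℝ] V)), μ.re = 0 := by
  obtain ⟨y, hy⟩ := hconv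
  intro μ hμ
  refine Module.End.re_eq_zero_of_hasEigenvalue_baseChange (Ω ∘ₗ ρ y) hy (fun v => ?_)
    (Module.End.hasEigenvalue_iff_mem_spectrum.mpr hμ)
  have hcomm : ρ y (X v) = X (ρ y v) := LinearMap.congr_fun (hXcomm y) v
  simpa [hcomm] using hXskew (ρ y v) v

/-- In a symplectic `𝔤`-module of convex type, every `𝔤`-endomorphism `X`
with `X^# = -X` (i.e. `X ∈ End_𝔤(V) ∩ 𝔰𝔭(V, Ω)`) has purely imaginary spectrum:
every complex eigenvalue of the complexification of `X` lies in `iℝ`. -/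
theorem sympmodconv_spec_skewsym_end
    (V : Type*) [AddCommGroup V] [Module ℝ V] [FiniteDimensional ℝ V]
    (Ω : LinearMap.BilinForm ℝ V)
    (hΩalt : ∀ v : V, Ω v v = 0)
    (hΩnondeg : ∀ v : V, (∀ w : V, Ω v w = 0) → v = 0)
    (g : Type*) [LieRing g] [LieAlgebra ℝ g]
    (ρ : g →ₗ⁅ℝ⁆ Module.End ℝ V)
    (hskew : ∀ (x : g) (v w : V), Ω (ρ x v) w + Ω v (ρ x w) = 0)
    (hconv : ∃ y : g, ∀ v : V, v ≠ 0 → 0 < Ω (ρ y v) v)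
    (X : Module.End ℝ V)
    (hXcomm : ∀ x : g, ρ x ∘ₗ X = X ∘ₗ ρ x)
    (hXskew : ∀ v w : V, Ω (X v) w + Ω v (X w) = 0) :
    ∀ μ ∈ spectrum ℂ (LinearMap.baseChange ℂ (X : V →ₗ[ℝ] V)), μ.re = 0 :=
  sympmodconv_spec_skewsym_end_general V Ω g ρ hconv X hXcomm hXskew
end

section
/- Let (V, Ω) be a finite-dimensional real symplectic vector space, 𝔷 a real vector space, β : V × V → 𝔷 a skew-symmetric bilinear map, and f ∈ 𝔷* with f ∘ β = Ω. For each g ∈ 𝔷* let Ψ_g ∈ End(V) be the unique linear map with (g ∘ β)(v, w) = Ω(Ψ_g v, w) for all v, w ∈ V. If D ⊆ 𝔷* spans 𝔷*, then 𝔰𝔭(V, β) = {x ∈ 𝔰𝔭(V, Ω) : [x, Ψ_g] = 0 for all g ∈ D}. -/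
/-- With `Ω = f ∘ β` symplectic and `Ψ_g` defined by
`(g ∘ β)(v, w) = Ω(Ψ_g v, w)`, if `D ⊆ 𝔷*` spans `𝔷*`, then
`𝔰𝔭(V, β) = {x ∈ 𝔰𝔭(V, Ω) : [x, Ψ_g] = 0 for all g ∈ D}`. -/
theorem sp_beta_eq_commutant_characterization
    (V Z : Type*) [AddCommGroup V] [Module ℝ V] [FiniteDimensional ℝ V]
    [AddCommGroup Z] [Module ℝ Z] [FiniteDimensional ℝ Z]
    (Ω : LinearMap.BilinForm ℝ V)
    (hΩalt : ∀ v : V, Ω v v = 0)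
    (hΩnondeg : ∀ v : V, (∀ w : V, Ω v w = 0) → v = 0)
    (β : V →ₗ[ℝ] V →ₗ[ℝ] Z)
    (hβskew : ∀ v w : V, β v w = - β w v)
    (f : Z →ₗ[ℝ] ℝ)
    (hf : ∀ v w : V, f (β v w) = Ω v w)
    (Ψ : (Z →ₗ[ℝ] ℝ) → (V →ₗ[ℝ] V))
    (hΨ : ∀ (g : Z →ₗ[ℝ] ℝ) (v w : V), g (β v w) = Ω (Ψ g v) w)
    (D : Set (Z →ₗ[ℝ] ℝ))
    (hspan : Submodule.span ℝ D = ⊤) :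
    {x : V →ₗ[ℝ] V | ∀ v w : V, β (x v) w + β v (x w) = 0} =
      {x : V →ₗ[ℝ] V | (∀ v w : V, Ω (x v) w + Ω v (x w) = 0) ∧
        ∀ g ∈ D, x ∘ₗ Ψ g = Ψ g ∘ₗ x} := by
  have hskew : ∀ v w : V, Ω v w = - Ω w v := by
    intro v w
    have h := hΩalt (v + w)
    simp only [map_add, LinearMap.add_apply, hΩalt] at h
    linarith
  have hΨsymm : ∀ (g : Z →ₗ[ℝ] ℝ) (v w : V), Ω (Ψ g v) w = Ω v (Ψ g w) := by
    intro g v w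
    rw [← hΨ, hβskew v w, map_neg, hΨ, hskew (Ψ g w) v]
    ring
  ext x
  simp only [Set.mem_setOf_eq]
  constructor
  · intro hx
    have hΩx : ∀ v w, Ω (x v) w + Ω v (x w) = 0 := by
      intro v w
      have h := congrArg f (hx v w)
      simpa [map_add, hf] using h
    refine ⟨hΩx, ?_⟩
    intro g hg
    apply LinearMap.ext
    intro v
    rw [← sub_eq_zero]
    apply hΩnondeg
    intro w
    have h1 : Ω (x (Ψ g v)) w = - Ω (Ψ g v) (x w) := by
      have := hΩx (Ψ g v) w; linarith
    have h2 : Ω (Ψ g v) (x w) = g (β v (x w)) := by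
      exact (hΨ g v (x w)).symm
    have h3 : g (β (x v) w) + g (β v (x w)) = 0 := by
      have := congrArg g (hx v w)
      simpa [map_add] using this
    have h4 : Ω (Ψ g (x v)) w = g (β (x v) w) := (hΨ g (x v) w).symm
    simp only [LinearMap.coe_comp, Function.comp_apply] at *
    rw [map_sub, LinearMap.sub_apply, h1, h2, h4]
    linarith
  · rintro ⟨hΩx, hcomm⟩
    intro v w
    have key : ∀ g : Z →ₗ[ℝ] ℝ, g (β (x v) w + β v (x w)) = 0 := by
      intro g
      have hD : ∀ g ∈ D, g (β (x v) w + β v (x w)) = 0 := by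
        intro g hg
        have hc : x (Ψ g v) = Ψ g (x v) := by
          have := congrFun (congrArg DFunLike.coe (hcomm g hg)) v
          simpa using this
        have h1 : g (β (x v) w) = Ω (Ψ g (x v)) w := hΨ g (x v) w
        have h2 : Ω (Ψ g (x v)) w = - Ω (Ψ g v) (x w) := by
          rw [← hc]
          have := hΩx (Ψ g v) w; linarith
        have h3 : Ω (Ψ g v) (x w) = g (β v (x w)) := by
          exact (hΨ g v (x w)).symm
        simp only [map_add]
        rw [h1, h2, h3]
        ring
      have hg : g ∈ Submodule.span ℝ D := hspan ▸ Submodule.mem_top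
      induction hg using Submodule.span_induction with
      | mem g hg => exact hD g hg
      | zero => simp
      | add a b _ _ ha hb => simp [LinearMap.add_apply, ha, hb]
      | smul c a _ ha => simp [LinearMap.smul_apply, ha]
    exact (Module.forall_dual_apply_eq_zero_iff ℝ _).mp key
end

section
/- Let (V, Ω) be a finite-dimensional real symplectic vector space and consider the Jacobi algebra 𝔥𝔰𝔭(V, Ω) = V × ℝ × 𝔰𝔭(V, Ω) with bracket [(v, z, x), (v', z', x')] = (x v' - x' v, Ω(v, v'), [x, x']). Then for every derivation D of 𝔥𝔰𝔭(V, Ω) that preserves the subalgebra {0} × {0} × 𝔰𝔭(V, Ω), there exist c ∈ ℝ and h ∈ 𝔰𝔭(V, Ω) such that D(v, z, x) = (c v + h v, 2 c z, [h, x]) for all (v, z, x). -/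
/-!
A derivation `D` preserves the centre `{0} × ℝ × {0}`, which produces `c`. Write
`D (v, 0, 0) = (A v, φ v, B v)`. The Leibniz rule applied to `[x, v] = x v` (`x ∈ 𝔰𝔭`) and to
`[v, w] = Ω v w` gives `φ (x v) = 0`, `B (x v) = ⁅x, B v⁆`, `B v w = B w v` and
`Ω (A v) w + Ω v (A w) = 2 c Ω v w`. Every vector has the form `x v`, so `φ = 0`. The trilinear
form `Ω u (B a b)` is totally symmetric, and it vanishes on the diagonal because `B a` commutes
with the rank-one element `Ω a (·) • a`, which kills `a`; by polarization `B = 0`. Finally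
`h = A - c` is skew-adjoint, and `D` acts on `𝔰𝔭` as `ad A = ad h`.
-/

/-- The bracket of the Jacobi algebra `𝔥𝔰𝔭(V, Ω) = V × ℝ × 𝔰𝔭(V, Ω)`:
`[(v,z,x),(v',z',x')] = (x v' - x' v, Ω v v', [x,x'])`. -/
def jacobiBracket {V : Type*} [AddCommGroup V] [Module ℝ V]
    (Ω : LinearMap.BilinForm ℝ V)
    (p q : V × ℝ × ↥(skewAdjointLieSubalgebra Ω)) :
    V × ℝ × ↥(skewAdjointLieSubalgebra Ω) :=
  ((p.2.2 : Module.End ℝ V) q.1 - (q.2.2 : Module.End ℝ V) p.1, Ω p.1 q.1, ⁅p.2.2, q.2.2⁆)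

open LinearMap (BilinForm)

section SymmetricTrilinear

variable {M N : Type*} [AddCommMonoid M] [AddCommGroup N] [IsAddTorsionFree N]

theorem eq_zero_of_symm_of_apply_self_eq_zero (T : M → M → M → N)
    (hadd : ∀ a b c d, T (a + b) c d = T a c d + T b c d)
    (h12 : ∀ a b c, T a b c = T b a c) (h23 : ∀ a b c, T a b c = T a c b)
    (hdiag : ∀ a, T a a a = 0) (a b c : M) : T a b c = 0 := by
  have hadd₂ : ∀ a b c d, T a (b + c) d = T a b d + T a c d := by
    intro a b c d; rw [h12, hadd, h12 b, h12 c]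
  have hadd₃ : ∀ a b c d, T a b (c + d) = T a b c + T a b d := by
    intro a b c d; rw [h23, hadd₂, h23 a c, h23 a d]
  have hpair : ∀ a b, T a a b + T a b b = 0 := by
    intro a b
    rw [← nsmul_right_inj three_ne_zero, smul_zero]
    calc 3 • (T a a b + T a b b) = T (a + b) (a + b) (a + b) - T a a a - T b b b := by
          simp only [hadd, hadd₂, hadd₃, h23 a b a, h12 b a a, h12 b a b, h23 b b a]
          abel
      _ = 0 := by simp only [hdiag, sub_zero]
  rw [← nsmul_right_inj two_ne_zero, smul_zero]
  calc 2 • T a b c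
      = (T (a + b) (a + b) c + T (a + b) c c) - (T a a c + T a c c) - (T b b c + T b c c) := by
        simp only [hadd, hadd₂, h12 b a c]
        abel
    _ = 0 := by simp only [hpair, sub_zero]

end SymmetricTrilinear

section SkewAdjoint

variable {R M : Type*} [CommRing R] [AddCommGroup M] [Module R M] {B : BilinForm R M}

theorem mem_skewAdjointLieSubalgebra_iff {f : Module.End R M} :
    f ∈ skewAdjointLieSubalgebra B ↔ ∀ v w, B (f v) w + B v (f w) = 0 := by
  change f ∈ B.skewAdjointSubmodule ↔ _
  simp only [LinearMap.mem_skewAdjointSubmodule, LinearMap.IsSkewAdjoint,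
    LinearMap.IsAdjointPair, Pi.neg_apply, map_neg, eq_neg_iff_add_eq_zero]

theorem apply_apply_comm_of_mem_skewAdjointLieSubalgebra (hB : B.IsAlt) {f : Module.End R M}
    (hf : f ∈ skewAdjointLieSubalgebra B) (v w : M) : B v (f w) = B w (f v) := by
  rw [← LinearMap.IsAlt.neg hB (f v) w, eq_neg_iff_add_eq_zero, add_comm]
  exact mem_skewAdjointLieSubalgebra_iff.mp hf v w

theorem smulRight_self_mem_skewAdjointLieSubalgebra (hB : B.IsAlt) (a : M) :
    (B a).smulRight a ∈ skewAdjointLieSubalgebra B := by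
  rw [mem_skewAdjointLieSubalgebra_iff]
  intro v w
  simp only [LinearMap.smulRight_apply, map_smul, LinearMap.smul_apply, smul_eq_mul,
    ← LinearMap.IsAlt.neg hB a v]
  ring

end SkewAdjoint

theorem exists_mem_skewAdjointLieSubalgebra_apply_eq {K M : Type*} [Field K] [AddCommGroup M]
    [Module K M] {B : BilinForm K M} (hB : B.IsAlt) (hsep : B.SeparatingLeft) (v : M) :
    ∃ f ∈ skewAdjointLieSubalgebra B, ∃ w, f w = v := by
  obtain rfl | hv := eq_or_ne v 0
  · exact ⟨0, zero_mem _, 0, rfl⟩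
  obtain ⟨w, hw⟩ : ∃ w, B v w ≠ 0 := by
    by_contra! h
    exact hv (hsep v h)
  refine ⟨(B v).smulRight v, smulRight_self_mem_skewAdjointLieSubalgebra hB v,
    (B v w)⁻¹ • w, ?_⟩
  rw [LinearMap.smulRight_apply, map_smul, smul_eq_mul, inv_mul_cancel₀ hw, one_smul]

namespace JacobiAlgebra

variable {V : Type*} [AddCommGroup V] [Module ℝ V] {Ω : BilinForm ℝ V}

local notation "𝔰𝔭" => skewAdjointLieSubalgebra Ω

@[simp]
theorem jacobiBracket_center_left (z : ℝ) (q : V × ℝ × 𝔰𝔭) :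
    jacobiBracket Ω (0, z, 0) q = 0 := by
  simp [jacobiBracket]

@[simp]
theorem jacobiBracket_heis_heis (v w : V) :
    jacobiBracket Ω ((v, 0, 0) : V × ℝ × 𝔰𝔭) (w, 0, 0) = (0, Ω v w, 0) := by
  simp [jacobiBracket]

@[simp]
theorem jacobiBracket_sp_heis (x : 𝔰𝔭) (v : V) :
    jacobiBracket Ω (0, 0, x) (v, 0, 0) = ((x : Module.End ℝ V) v, 0, 0) := by
  simp [jacobiBracket, sub_eq_add_neg]

theorem eq_center_of_forall_jacobiBracket_eq_zero (hΩ : Ω.SeparatingLeft) {p : V × ℝ × 𝔰𝔭}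
    (hp : ∀ q, jacobiBracket Ω p q = 0) : p = (0, p.2.1, 0) := by
  have hv : ∀ w, (p.2.2 : Module.End ℝ V) w = 0 ∧ Ω p.1 w = 0 := fun w ↦ by
    simpa [jacobiBracket] using hp (w, 0, 0)
  refine Prod.ext (hΩ _ fun w ↦ (hv w).2) (Prod.ext rfl ?_)
  ext w
  exact (hv w).1

def IsDerivation (D : V × ℝ × 𝔰𝔭 →ₗ[ℝ] V × ℝ × 𝔰𝔭) : Prop :=
  ∀ p q, D (jacobiBracket Ω p q) = jacobiBracket Ω (D p) q + jacobiBracket Ω p (D q)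

def heisEnd (D : V × ℝ × 𝔰𝔭 →ₗ[ℝ] V × ℝ × 𝔰𝔭) : Module.End ℝ V :=
  LinearMap.fst ℝ V (ℝ × 𝔰𝔭) ∘ₗ D ∘ₗ LinearMap.inl ℝ V (ℝ × 𝔰𝔭)

def heisToSp (D : V × ℝ × 𝔰𝔭 →ₗ[ℝ] V × ℝ × 𝔰𝔭) : V →ₗ[ℝ] 𝔰𝔭 :=
  LinearMap.snd ℝ ℝ 𝔰𝔭 ∘ₗ LinearMap.snd ℝ V (ℝ × 𝔰𝔭) ∘ₗ D ∘ₗ LinearMap.inl ℝ V (ℝ × 𝔰𝔭)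

variable {D : V × ℝ × skewAdjointLieSubalgebra Ω →ₗ[ℝ] V × ℝ × skewAdjointLieSubalgebra Ω}

@[simp]
theorem heisEnd_apply (v : V) : heisEnd D v = (D (v, 0, 0)).1 := rfl

@[simp]
theorem heisToSp_apply (v : V) : heisToSp D v = (D (v, 0, 0)).2.2 := rfl

namespace IsDerivation

theorem exists_apply_center (hD : IsDerivation D) (hΩ : Ω.SeparatingLeft) :
    ∃ c : ℝ, ∀ z : ℝ, D (0, z, 0) = (0, 2 * c * z, 0) := by
  have hp : D (0, 1, 0) = (0, (D (0, 1, 0)).2.1, 0) :=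
    eq_center_of_forall_jacobiBracket_eq_zero hΩ fun q ↦ by simpa using (hD (0, 1, 0) q).symm
  refine ⟨(D (0, 1, 0)).2.1 / 2, fun z ↦ ?_⟩
  have hz : ((0 : V), z, (0 : 𝔰𝔭)) = z • (0, 1, 0) := by simp
  rw [hz, map_smul, hp]
  simp only [Prod.smul_mk, smul_zero, smul_eq_mul, Prod.mk.injEq, and_true, true_and]
  ring

theorem apply_sp_apply (hD : IsDerivation D) {x : 𝔰𝔭} (hx : (D (0, 0, x)).1 = 0) (v : V) :
    D ((x : Module.End ℝ V) v, 0, 0) =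
      (((D (0, 0, x)).2.2 : Module.End ℝ V) v + (x : Module.End ℝ V) (heisEnd D v), 0,
        ⁅x, heisToSp D v⁆) := by
  rw [← jacobiBracket_sp_heis, hD]
  simp [jacobiBracket, hx]

theorem apply_heis_bracket (hD : IsDerivation D) {c : ℝ}
    (hc : ∀ z : ℝ, D (0, z, 0) = (0, 2 * c * z, 0)) (v w : V) :
    (0, 2 * c * Ω v w, 0) =
      ((heisToSp D v : Module.End ℝ V) w - (heisToSp D w : Module.End ℝ V) v,
        Ω (heisEnd D v) w + Ω v (heisEnd D w), (0 : 𝔰𝔭)) := by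
  rw [← hc, ← jacobiBracket_heis_heis, hD]
  simp [jacobiBracket, sub_eq_add_neg]

theorem heisToSp_apply_comm (hD : IsDerivation D) {c : ℝ}
    (hc : ∀ z : ℝ, D (0, z, 0) = (0, 2 * c * z, 0)) (v w : V) :
    (heisToSp D v : Module.End ℝ V) w = (heisToSp D w : Module.End ℝ V) v :=
  sub_eq_zero.mp (congrArg Prod.fst (hD.apply_heis_bracket hc v w)).symm

theorem heisEnd_sub_smul_one_mem (hD : IsDerivation D) {c : ℝ}
    (hc : ∀ z : ℝ, D (0, z, 0) = (0, 2 * c * z, 0)) :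
    heisEnd D - c • 1 ∈ skewAdjointLieSubalgebra Ω := by
  rw [mem_skewAdjointLieSubalgebra_iff]
  intro v w
  have h := congrArg (·.2.1) (hD.apply_heis_bracket hc v w)
  simp only [LinearMap.sub_apply, LinearMap.smul_apply, Module.End.one_apply, map_sub,
    map_smul, smul_eq_mul] at h ⊢
  linarith

theorem snd_fst_apply_heis (hD : IsDerivation D) (hΩ : Ω.IsAlt) (hsep : Ω.SeparatingLeft)
    (hsp : ∀ x : 𝔰𝔭, (D (0, 0, x)).1 = 0) (v : V) : (D (v, 0, 0)).2.1 = 0 := by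
  obtain ⟨x, hx, w, rfl⟩ := exists_mem_skewAdjointLieSubalgebra_apply_eq hΩ hsep v
  exact congrArg (·.2.1) (hD.apply_sp_apply (x := ⟨x, hx⟩) (hsp _) w)

theorem apply_heisToSp_apply_self (hD : IsDerivation D) (hΩ : Ω.IsAlt)
    (hsp : ∀ x : 𝔰𝔭, (D (0, 0, x)).1 = 0) (a : V) :
    Ω a ((heisToSp D a : Module.End ℝ V) a) = 0 := by
  set x : 𝔰𝔭 := ⟨(Ω a).smulRight a, smulRight_self_mem_skewAdjointLieSubalgebra hΩ a⟩
  have hxa : (x : Module.End ℝ V) a = 0 := by simp [x, hΩ.self_eq_zero]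
  have hcomm : ⁅x, heisToSp D a⁆ = 0 := by
    simpa [hxa, Prod.mk_zero_zero] using (congrArg (·.2.2) (hD.apply_sp_apply (hsp x) a)).symm
  have h := congrArg (fun y : 𝔰𝔭 ↦ (y : Module.End ℝ V) a) hcomm
  simp only [LieSubalgebra.coe_bracket, Ring.lie_def, LinearMap.sub_apply, Module.End.mul_apply,
    hxa, map_zero, sub_zero, ZeroMemClass.coe_zero, LinearMap.zero_apply] at h
  rcases smul_eq_zero.mp h with h | rfl
  · exact h
  · simp

theorem heisToSp_eq_zero (hD : IsDerivation D) (hΩ : Ω.IsAlt) (hsep : Ω.SeparatingLeft) {c : ℝ}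
    (hc : ∀ z : ℝ, D (0, z, 0) = (0, 2 * c * z, 0)) (hsp : ∀ x : 𝔰𝔭, (D (0, 0, x)).1 = 0) :
    heisToSp D = 0 := by
  have hT := eq_zero_of_symm_of_apply_self_eq_zero
    (fun a b u ↦ Ω u ((heisToSp D a : Module.End ℝ V) b))
    (fun a b u v ↦ by simp only [map_add, AddMemClass.coe_add, LinearMap.add_apply])
    (fun a b u ↦ by rw [hD.heisToSp_apply_comm hc])
    (fun a b u ↦ apply_apply_comm_of_mem_skewAdjointLieSubalgebra hΩ (heisToSp D a).2 u b)
    (hD.apply_heisToSp_apply_self hΩ hsp)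
  ext v w
  refine hsep _ fun u ↦ ?_
  rw [← LinearMap.IsAlt.neg hΩ u ((heisToSp D v : Module.End ℝ V) w), hT, neg_zero]

theorem apply_heis (hD : IsDerivation D) (hΩ : Ω.IsAlt) (hsep : Ω.SeparatingLeft) {c : ℝ}
    (hc : ∀ z : ℝ, D (0, z, 0) = (0, 2 * c * z, 0)) (hsp : ∀ x : 𝔰𝔭, (D (0, 0, x)).1 = 0)
    (v : V) : D (v, 0, 0) = (heisEnd D v, 0, 0) :=
  Prod.ext rfl <| Prod.ext (hD.snd_fst_apply_heis hΩ hsep hsp v) <|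
    LinearMap.congr_fun (hD.heisToSp_eq_zero hΩ hsep hc hsp) v

theorem coe_snd_snd_apply_sp (hD : IsDerivation D) {x : 𝔰𝔭} (hx : (D (0, 0, x)).1 = 0) :
    ((D (0, 0, x)).2.2 : Module.End ℝ V) = ⁅heisEnd D, (x : Module.End ℝ V)⁆ := by
  ext v
  have h := congrArg Prod.fst (hD.apply_sp_apply hx v)
  simp only [heisEnd_apply] at h
  rw [Ring.lie_def, LinearMap.sub_apply, Module.End.mul_apply, Module.End.mul_apply,
    heisEnd_apply, heisEnd_apply, h, add_sub_cancel_right]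

end IsDerivation

end JacobiAlgebra

theorem jacobi_algebra_derivation_form_general
    (V : Type*) [AddCommGroup V] [Module ℝ V]
    (Ω : LinearMap.BilinForm ℝ V)
    (hΩalt : ∀ v : V, Ω v v = 0)
    (hΩnondeg : ∀ v : V, (∀ w : V, Ω v w = 0) → v = 0)
    (D : (V × ℝ × ↥(skewAdjointLieSubalgebra Ω)) →ₗ[ℝ]
      (V × ℝ × ↥(skewAdjointLieSubalgebra Ω)))
    (hD : ∀ p q, D (jacobiBracket Ω p q) =
      jacobiBracket Ω (D p) q + jacobiBracket Ω p (D q))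
    (hDsp : ∀ x : ↥(skewAdjointLieSubalgebra Ω),
      (D (0, 0, x)).1 = 0 ∧ (D (0, 0, x)).2.1 = 0) :
    ∃ (c : ℝ) (h : ↥(skewAdjointLieSubalgebra Ω)),
      ∀ (v : V) (z : ℝ) (x : ↥(skewAdjointLieSubalgebra Ω)),
        D (v, z, x) = (c • v + (h : Module.End ℝ V) v, 2 * c * z, ⁅h, x⁆) := by
  have hDer : JacobiAlgebra.IsDerivation D := hD
  have hsp (x : ↥(skewAdjointLieSubalgebra Ω)) : (D (0, 0, x)).1 = 0 := (hDsp x).1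
  obtain ⟨c, hc⟩ := hDer.exists_apply_center hΩnondeg
  let h : ↥(skewAdjointLieSubalgebra Ω) :=
    ⟨JacobiAlgebra.heisEnd D - c • 1, hDer.heisEnd_sub_smul_one_mem hc⟩
  refine ⟨c, h, fun v z x ↦ ?_⟩
  have hx : D (0, 0, x) = (0, 0, ⁅h, x⁆) := by
    refine Prod.ext (hsp x) (Prod.ext (hDsp x).2 (Subtype.ext ?_))
    rw [hDer.coe_snd_snd_apply_sp (hsp x)]
    simp only [h, LieSubalgebra.coe_bracket, Ring.lie_def, sub_mul, mul_sub, smul_mul_assoc,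
      mul_smul_comm, one_mul, mul_one]
    abel
  calc D (v, z, x) = D (v, 0, 0) + D (0, z, 0) + D (0, 0, x) := by
        rw [← map_add, ← map_add]; simp
    _ = _ := by
        rw [hDer.apply_heis hΩalt hΩnondeg hc hsp, hc, hx]
        simp [h]

/-- Every derivation of the Jacobi algebra `𝔥𝔰𝔭(V, Ω)` preserving the
subalgebra `{0} × {0} × 𝔰𝔭(V, Ω)` is of the form
`D(v, z, x) = (c v + h v, 2 c z, [h, x])` for some `c ∈ ℝ` and `h ∈ 𝔰𝔭(V, Ω)`. -/
theorem jacobi_algebra_derivation_form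
    (V : Type*) [AddCommGroup V] [Module ℝ V] [FiniteDimensional ℝ V]
    (Ω : LinearMap.BilinForm ℝ V)
    (hΩalt : ∀ v : V, Ω v v = 0)
    (hΩnondeg : ∀ v : V, (∀ w : V, Ω v w = 0) → v = 0)
    (D : (V × ℝ × ↥(skewAdjointLieSubalgebra Ω)) →ₗ[ℝ]
      (V × ℝ × ↥(skewAdjointLieSubalgebra Ω)))
    (hD : ∀ p q, D (jacobiBracket Ω p q) =
      jacobiBracket Ω (D p) q + jacobiBracket Ω p (D q))
    (hDsp : ∀ x : ↥(skewAdjointLieSubalgebra Ω),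
      (D (0, 0, x)).1 = 0 ∧ (D (0, 0, x)).2.1 = 0) :
    ∃ (c : ℝ) (h : ↥(skewAdjointLieSubalgebra Ω)),
      ∀ (v : V) (z : ℝ) (x : ↥(skewAdjointLieSubalgebra Ω)),
        D (v, z, x) = (c • v + (h : Module.End ℝ V) v, 2 * c * z, ⁅h, x⁆) :=
  jacobi_algebra_derivation_form_general V Ω hΩalt hΩnondeg D hD hDsp
end

section
/- Let (V, Ω) be a finite-dimensional real symplectic vector space with V ≠ 0, and let 𝔤 = 𝔥𝔰𝔭(V, Ω) be the Jacobi algebra. A nonzero derivation D of 𝔤 of the form D(v, z, x) = (c v + h v, 2 c z, [h, x]) (with c ∈ ℝ, h ∈ 𝔰𝔭(V, Ω)) satisfies 𝔤 = 𝔤_{-1}(D) ⊕ 𝔤_0(D) ⊕ 𝔤_1(D) if and only if c ∈ {1/2, -1/2} and τ := 2h is an antisymplectic involution of V (τ² = id_V and Ω(τv, τw) = -Ω(v, w)). -/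
namespace Module.End

variable {K M : Type*} [Field K] [AddCommGroup M] [Module K M]

theorem pow_three_apply (f : End K M) (m : M) : (f ^ 3) m = f (f (f m)) := by
  simp only [pow_succ, pow_zero, one_mul, mul_apply]

theorem eigenspace_neg_one_sup_zero_sup_one_eq_top_iff [NeZero (2 : K)] (f : End K M) :
    f.eigenspace (-1) ⊔ f.eigenspace 0 ⊔ f.eigenspace 1 = ⊤ ↔ f ^ 3 = f := by
  constructor
  · intro htop
    ext m
    have hm : m ∈ f.eigenspace (-1) ⊔ f.eigenspace 0 ⊔ f.eigenspace 1 := htop ▸ trivial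
    obtain ⟨y, hy, w, hw, rfl⟩ := Submodule.mem_sup.mp hm
    obtain ⟨a, ha, b, hb, rfl⟩ := Submodule.mem_sup.mp hy
    rw [mem_eigenspace_iff] at ha hb hw
    simp [pow_three_apply, ha, hb, hw]
  · intro hf
    have hf' (m : M) : f (f (f m)) = f m := by rw [← pow_three_apply, hf]
    refine eq_top_iff.mpr fun m _ => ?_
    have hneg : (2⁻¹ : K) • (f (f m) - f m) ∈ f.eigenspace (-1) := by
      rw [mem_eigenspace_iff]
      simp only [map_smul, map_sub, hf']
      module
    have hzero : m - f (f m) ∈ f.eigenspace 0 := by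
      simp [hf']
    have hone : (2⁻¹ : K) • (f (f m) + f m) ∈ f.eigenspace 1 := by
      rw [mem_eigenspace_iff]
      simp only [map_smul, map_add, hf']
      module
    have halves : (2⁻¹ : K) + 2⁻¹ = 1 := by rw [← two_mul, mul_inv_cancel₀ two_ne_zero]
    convert Submodule.add_mem_sup (Submodule.add_mem_sup hneg hzero) hone using 1
    linear_combination (norm := module) -(halves • f (f m))

theorem HasEigenvalue.pow_three_eq_self {f : End K M} (hf : f ^ 3 = f) {μ : K}
    (hμ : f.HasEigenvalue μ) : μ ^ 3 = μ := by
  obtain ⟨x, hx⟩ := hμ.exists_hasEigenvector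
  have : μ ^ 3 • x = μ • x := by rw [← hx.pow_apply, hf, hx.apply_eq_smul]
  exact smul_left_injective K hx.2 this

theorem eq_zero_of_pow_three_eq_self [NeZero (2 : K)] {f : End K M} (hf : f ^ 3 = f)
    (h_neg : ¬ f.HasEigenvalue (-1)) (h_one : ¬ f.HasEigenvalue 1) : f = 0 := by
  have h_neg' : f.eigenspace (-1) = ⊥ := not_not.mp h_neg
  have h_one' : f.eigenspace 1 = ⊥ := not_not.mp h_one
  rw [← eigenspace_neg_one_sup_zero_sup_one_eq_top_iff, h_neg', h_one', bot_sup_eq, sup_bot_eq,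
    eigenspace_zero] at hf
  exact LinearMap.ker_eq_top.mp hf

variable [CharZero K]

theorem two_smul_comp_two_smul_eq_id_iff (f : End K M) :
    ((2 : K) • f) ∘ₗ ((2 : K) • f) = LinearMap.id ↔ f ^ 2 = (4⁻¹ : K) • 1 := by
  rw [← mul_eq_comp, smul_mul_smul_comm, ← sq f, ← one_eq_id, eq_inv_smul_iff₀ (by norm_num)]
  norm_num

theorem sq_eq_of_add_pow_three_eq_self {f : End K M} {c : K} (hc : c ^ 2 = 4⁻¹)
    (hf : (c • 1 + f) ^ 3 = c • 1 + f) (h : ¬ f.HasEigenvalue (-3 * c)) :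
    f ^ 2 = (4⁻¹ : K) • 1 := by
  have h' : f.eigenspace (-3 * c) = ⊥ := not_not.mp h
  ext v
  have hv := LinearMap.congr_fun hf v
  simp only [pow_three_apply, LinearMap.add_apply, LinearMap.smul_apply, one_apply, map_add,
    map_smul] at hv
  -- `(c + f)³ - (c + f) = (f + 3c)(f² - 1/4)` because `c² = 1/4`
  have hw : f (f v) - (4⁻¹ : K) • v ∈ f.eigenspace (-3 * c) := by
    rw [mem_eigenspace_iff, map_sub, map_smul]
    linear_combination (norm := module) hv - hc • ((3 : K) • f v + c • v)
  rw [h', Submodule.mem_bot, sub_eq_zero] at hw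
  simpa [sq] using hw

theorem add_pow_three_eq_self_of_sq_eq {f : End K M} {c : K} (hc : c ^ 2 = 4⁻¹)
    (hf : f ^ 2 = (4⁻¹ : K) • 1) : (c • 1 + f) ^ 3 = c • 1 + f := by
  have hf' (v : M) : f (f v) = (4⁻¹ : K) • v := by simpa [sq] using LinearMap.congr_fun hf v
  ext v
  simp only [pow_three_apply, LinearMap.add_apply, LinearMap.smul_apply, one_apply, map_add,
    map_smul, hf']
  linear_combination (norm := module) hc • ((3 : K) • f v + c • v)

theorem lie_lie_lie_eq_lie_of_sq_eq {f : End K M} (hf : f ^ 2 = (4⁻¹ : K) • 1) (g : End K M) :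
    ⁅f, ⁅f, ⁅f, g⁆⁆⁆ = ⁅f, g⁆ := by
  have hf' (v : M) : f (f v) = (4⁻¹ : K) • v := by simpa [sq] using LinearMap.congr_fun hf v
  ext v
  simp only [Ring.lie_def, LinearMap.sub_apply, mul_apply, map_sub, map_smul, hf']
  module

end Module.End

namespace LinearMap

variable {R M M₂ : Type*} [CommSemiring R] [AddCommMonoid M] [AddCommMonoid M₂] [Module R M]
  [Module R M₂]

theorem prodMap_pow (f : Module.End R M) (g : Module.End R M₂) (n : ℕ) :
    f.prodMap g ^ n = (f ^ n).prodMap (g ^ n) :=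
  (map_pow (prodMapAlgHom R M M₂) (f, g) n).symm

theorem prodMap_inj {f f' : Module.End R M} {g g' : Module.End R M₂} :
    f.prodMap g = f'.prodMap g' ↔ f = f' ∧ g = g' := by
  refine ⟨fun h => ⟨ext fun m => ?_, ext fun m => ?_⟩, fun ⟨hf, hg⟩ => hf ▸ hg ▸ rfl⟩
  · simpa using congrArg Prod.fst (LinearMap.congr_fun h (m, 0))
  · simpa using congrArg Prod.snd (LinearMap.congr_fun h (0, m))

theorem prodMap_pow_three_eq_self_iff (f : Module.End R M) (g : Module.End R M₂) :
    f.prodMap g ^ 3 = f.prodMap g ↔ f ^ 3 = f ∧ g ^ 3 = g := by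
  rw [prodMap_pow, prodMap_inj]

end LinearMap

namespace LinearMap.BilinForm

open Module

variable {K V : Type*} [Field K] [AddCommGroup V] [Module K V] {Ω : LinearMap.BilinForm K V}

theorem apply_skewAdjoint_left (x : skewAdjointLieSubalgebra Ω) (v w : V) :
    Ω ((x : End K V) v) w = -Ω v ((x : End K V) w) := by
  simpa using x.2 v w

theorem apply_skewAdjoint_apply_skewAdjoint (x : skewAdjointLieSubalgebra Ω) (v w : V) :
    Ω ((x : End K V) v) ((x : End K V) w) = -Ω v (((x : End K V) ^ 2) w) := by
  rw [apply_skewAdjoint_left, sq, End.mul_apply]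

def infinitesimalTransvection (hΩ : Ω.IsAlt) (v : V) : skewAdjointLieSubalgebra Ω :=
  ⟨(Ω.flip v).smulRight v, fun u w => by
    simp only [smulRight_apply, flip_apply, map_smul, LinearMap.smul_apply, smul_eq_mul,
      LinearMap.neg_apply]
    rw [← hΩ.neg_eq w v]
    ring⟩

theorem infinitesimalTransvection_apply (hΩ : Ω.IsAlt) (v u : V) :
    (infinitesimalTransvection hΩ v : End K V) u = Ω u v • v :=
  rfl

theorem lie_infinitesimalTransvection (hΩ : Ω.IsAlt) (x : skewAdjointLieSubalgebra Ω) {v : V}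
    {t : K} (hv : (x : End K V) v = t • v) :
    ⁅x, infinitesimalTransvection hΩ v⁆ = (2 * t) • infinitesimalTransvection hΩ v := by
  refine Subtype.ext (LinearMap.ext fun u => ?_)
  simp only [LieSubalgebra.coe_bracket, Ring.lie_def, SetLike.val_smul, LinearMap.sub_apply,
    End.mul_apply, LinearMap.smul_apply, infinitesimalTransvection_apply, map_smul, hv,
    apply_skewAdjoint_left]
  module

theorem infinitesimalTransvection_ne_zero (hΩ : Ω.IsAlt) (hΩ' : Ω.SeparatingLeft) {v : V}
    (hv : v ≠ 0) : infinitesimalTransvection hΩ v ≠ 0 := by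
  obtain ⟨w, hw⟩ : ∃ w, Ω v w ≠ 0 := by
    by_contra! h
    exact hv (hΩ' v h)
  intro h
  have := LinearMap.congr_fun (congrArg Subtype.val h) w
  rw [infinitesimalTransvection_apply, ← hΩ.neg_eq, ZeroMemClass.coe_zero, LinearMap.zero_apply,
    smul_eq_zero, neg_eq_zero] at this
  exact this.elim hw hv

theorem hasEigenvalue_ad_of_hasEigenvalue (hΩ : Ω.IsAlt) (hΩ' : Ω.SeparatingLeft)
    (x : skewAdjointLieSubalgebra Ω) {t : K} (ht : (x : End K V).HasEigenvalue t) :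
    (LieAlgebra.ad K _ x).HasEigenvalue (2 * t) := by
  obtain ⟨v, hv⟩ := ht.exists_hasEigenvector
  refine End.hasEigenvalue_of_hasEigenvector ⟨?_, infinitesimalTransvection_ne_zero hΩ hΩ' hv.2⟩
  rw [End.mem_eigenspace_iff, LieAlgebra.ad_apply]
  exact lie_infinitesimalTransvection hΩ x hv.apply_eq_smul

variable [CharZero K]

theorem ad_pow_three_eq_self_of_sq_eq {x : skewAdjointLieSubalgebra Ω}
    (hx : (x : End K V) ^ 2 = (4⁻¹ : K) • 1) :
    LieAlgebra.ad K _ x ^ 3 = LieAlgebra.ad K _ x := by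
  refine LinearMap.ext fun y => Subtype.ext ?_
  simp only [End.pow_three_apply, LieAlgebra.ad_apply, LieSubalgebra.coe_bracket,
    End.lie_lie_lie_eq_lie_of_sq_eq hx]

theorem apply_two_smul_apply_two_smul_of_sq_eq {x : skewAdjointLieSubalgebra Ω}
    (hx : (x : End K V) ^ 2 = (4⁻¹ : K) • 1) (v w : V) :
    Ω (((2 : K) • (x : End K V)) v) (((2 : K) • (x : End K V)) w) = -Ω v w := by
  simp only [LinearMap.smul_apply, map_smul, apply_skewAdjoint_apply_skewAdjoint, hx,
    End.one_apply, smul_eq_mul]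
  ring

end LinearMap.BilinForm

namespace Jacobi

open Module

variable {V : Type*} [AddCommGroup V] [Module ℝ V] {Ω : LinearMap.BilinForm ℝ V}
  {c : ℝ} {h : skewAdjointLieSubalgebra Ω} {D : End ℝ (V × ℝ × skewAdjointLieSubalgebra Ω)}

theorem eq_prodMap_of_apply
    (hD : ∀ v z x, D (v, z, x) = (c • v + (h : End ℝ V) v, 2 * c * z, ⁅h, x⁆)) :
    D = (c • 1 + (h : End ℝ V)).prodMap
      ((algebraMap ℝ (End ℝ ℝ) (2 * c)).prodMap (LieAlgebra.ad ℝ _ h)) :=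
  LinearMap.ext fun ⟨v, z, x⟩ => by simp [hD, mul_assoc]

theorem pow_three_eq_self_iff_of_apply
    (hD : ∀ v z x, D (v, z, x) = (c • v + (h : End ℝ V) v, 2 * c * z, ⁅h, x⁆)) :
    D ^ 3 = D ↔ (c • 1 + (h : End ℝ V)) ^ 3 = c • 1 + (h : End ℝ V) ∧ (2 * c) ^ 3 = 2 * c ∧
      LieAlgebra.ad ℝ _ h ^ 3 = LieAlgebra.ad ℝ _ h := by
  rw [eq_prodMap_of_apply hD, LinearMap.prodMap_pow_three_eq_self_iff,
    LinearMap.prodMap_pow_three_eq_self_iff, ← map_pow, (algebraMap ℝ (End ℝ ℝ)).injective.eq_iff]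

end Jacobi

theorem two_mul_pow_three_eq_self_iff {c : ℝ} :
    (2 * c) ^ 3 = 2 * c ↔ c = 0 ∨ c = 1 / 2 ∨ c = -1 / 2 := by
  constructor
  · intro hc
    have : c * ((2 * c - 1) * (2 * c + 1)) = 0 := by linear_combination hc / 2
    rcases mul_eq_zero.mp this with h₀ | h₀
    · exact Or.inl h₀
    · rcases mul_eq_zero.mp h₀ with h₀ | h₀
      exacts [Or.inr (Or.inl (by linarith)), Or.inr (Or.inr (by linarith))]
  · rintro (rfl | rfl | rfl) <;> norm_num

theorem jacobi_derivation_three_grading_iff_general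
    (V : Type*) [AddCommGroup V] [Module ℝ V]
    (Ω : LinearMap.BilinForm ℝ V)
    (hΩalt : ∀ v : V, Ω v v = 0)
    (hΩnondeg : ∀ v : V, (∀ w : V, Ω v w = 0) → v = 0)
    (c : ℝ) (h : ↥(skewAdjointLieSubalgebra Ω))
    (D : Module.End ℝ (V × ℝ × ↥(skewAdjointLieSubalgebra Ω)))
    (hDform : ∀ (v : V) (z : ℝ) (x : ↥(skewAdjointLieSubalgebra Ω)),
      D (v, z, x) = (c • v + (h : Module.End ℝ V) v, 2 * c * z, ⁅h, x⁆))
    (hDne : D ≠ 0) :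
    (Module.End.eigenspace D (-1) ⊔ Module.End.eigenspace D 0 ⊔
        Module.End.eigenspace D 1 = ⊤) ↔
      ((c = 1/2 ∨ c = -1/2) ∧
        ((2 : ℝ) • (h : Module.End ℝ V)) ∘ₗ ((2 : ℝ) • (h : Module.End ℝ V)) =
          LinearMap.id ∧
        ∀ v w : V, Ω (((2 : ℝ) • (h : Module.End ℝ V)) v)
            (((2 : ℝ) • (h : Module.End ℝ V)) w) = - Ω v w) := by
  rw [Module.End.eigenspace_neg_one_sup_zero_sup_one_eq_top_iff,
    Jacobi.pow_three_eq_self_iff_of_apply hDform, Module.End.two_smul_comp_two_smul_eq_id_iff]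
  constructor
  · rintro ⟨hV, hℝ, had⟩
    have hev (t : ℝ) (ht : (h : Module.End ℝ V).HasEigenvalue t) : (2 * t) ^ 3 = 2 * t :=
      (LinearMap.BilinForm.hasEigenvalue_ad_of_hasEigenvalue hΩalt hΩnondeg h ht).pow_three_eq_self
        had
    obtain rfl | hc := two_mul_pow_three_eq_self_iff.mp hℝ
    · refine absurd ?_ hDne
      have hH : (h : Module.End ℝ V) = 0 := Module.End.eq_zero_of_pow_three_eq_self
        (by simpa using hV) (fun h₁ => absurd (hev _ h₁) (by norm_num))
        (fun h₁ => absurd (hev _ h₁) (by norm_num))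
      rw [Jacobi.eq_prodMap_of_apply hDform, show h = 0 from Subtype.ext hH]
      simp
    · have hc2 : c ^ 2 = 4⁻¹ := by rcases hc with rfl | rfl <;> norm_num
      have hsq := Module.End.sq_eq_of_add_pow_three_eq_self hc2 hV fun h₃ => by
        have := hev _ h₃
        rcases hc with rfl | rfl <;> norm_num at this
      exact ⟨hc, hsq, LinearMap.BilinForm.apply_two_smul_apply_two_smul_of_sq_eq hsq⟩
  · rintro ⟨hc, hsq, -⟩
    have hc2 : c ^ 2 = 4⁻¹ := by rcases hc with rfl | rfl <;> norm_num
    exact ⟨Module.End.add_pow_three_eq_self_of_sq_eq hc2 hsq,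
      two_mul_pow_three_eq_self_iff.mpr (Or.inr hc),
      LinearMap.BilinForm.ad_pow_three_eq_self_of_sq_eq hsq⟩

/-- A nonzero derivation `D(v,z,x) = (c v + h v, 2 c z, [h,x])` of the
Jacobi algebra `𝔤 = 𝔥𝔰𝔭(V, Ω)` (with `V ≠ 0`) satisfies
`𝔤 = 𝔤₋₁(D) ⊕ 𝔤₀(D) ⊕ 𝔤₁(D)` if and only if `c = ±1/2` and `τ = 2h` is an
antisymplectic involution of `V`. -/
theorem jacobi_derivation_three_grading_iff
    (V : Type*) [AddCommGroup V] [Module ℝ V] [FiniteDimensional ℝ V] [Nontrivial V]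
    (Ω : LinearMap.BilinForm ℝ V)
    (hΩalt : ∀ v : V, Ω v v = 0)
    (hΩnondeg : ∀ v : V, (∀ w : V, Ω v w = 0) → v = 0)
    (c : ℝ) (h : ↥(skewAdjointLieSubalgebra Ω))
    (D : Module.End ℝ (V × ℝ × ↥(skewAdjointLieSubalgebra Ω)))
    (hD : ∀ p q, D (jacobiBracket Ω p q) =
      jacobiBracket Ω (D p) q + jacobiBracket Ω p (D q))
    (hDform : ∀ (v : V) (z : ℝ) (x : ↥(skewAdjointLieSubalgebra Ω)),
      D (v, z, x) = (c • v + (h : Module.End ℝ V) v, 2 * c * z, ⁅h, x⁆))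
    (hDne : D ≠ 0) :
    (Module.End.eigenspace D (-1) ⊔ Module.End.eigenspace D 0 ⊔
        Module.End.eigenspace D 1 = ⊤) ↔
      ((c = 1/2 ∨ c = -1/2) ∧
        ((2 : ℝ) • (h : Module.End ℝ V)) ∘ₗ ((2 : ℝ) • (h : Module.End ℝ V)) =
          LinearMap.id ∧
        ∀ v w : V, Ω (((2 : ℝ) • (h : Module.End ℝ V)) v)
            (((2 : ℝ) • (h : Module.End ℝ V)) w) = - Ω v w) :=
  jacobi_derivation_three_grading_iff_general V Ω hΩalt hΩnondeg c h D hDform hDne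
end

section
/- Let V be a finite-dimensional vector space over a field of characteristic 0, and let X ∈ End(V) be diagonalizable with all eigenvalues in {-1/2, 0, 1/2}. Then ad(X) acting on End(V) by ad(X)(Y) = XY - YX is diagonalizable with all eigenvalues in {-1, -1/2, 0, 1/2, 1}. Conversely, if X ∈ 𝔰𝔭(V, Ω) for a symplectic form Ω, X acts irreducibly enough that ad(X) on 𝔰𝔭(V, Ω) has spectrum {-1, 0, 1} with X ≠ 0, then X is diagonalizable on V with spectrum {-1/2, 1/2}. -/
/-!
An endomorphism is diagonalizable with eigenvalues in a finite set `s` exactly when it is killed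
by `∏ μ ∈ s, (t - μ)`. If `X` is killed by `(t + 1/2) t (t - 1/2)`, so are the commuting
operators of left and right multiplication by `X` on `End V`, and `ad X` is their difference;
hence its eigenvalues are differences of two elements of `{-1/2, 0, 1/2}`.

For the converse, `Ω.symProd u v = Ω(u, ·) v + Ω(v, ·) u` is the image of `u v ∈ Sym² V` in
`𝔰𝔭(V, Ω)`, and `ad X` acts on it as `X ⊗ 1 + 1 ⊗ X`. The grading gives `(ad X)³ = ad X` on
`𝔰𝔭(V, Ω)`. A linear map `End V → V` sending `Ω.symProd (Xⁱ a) (Xʲ a)` to `2 X^(i+j) a` turns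
`(ad X)³ (Ω.symProd a a) = ad X (Ω.symProd a a)` into `16 X³ a = 4 X a`. A nonzero `b ∈ ker X`
would give `Ω.symProd (X³ a - X a) b = 0`, i.e. `X³ = X`, which with `4 X³ = X` forces `X = 0`.
So `X` is injective, `4 X² = 1`, and `X` is diagonalizable with eigenvalues `±1/2`.
-/

namespace Module.End

open Polynomial

variable {K M : Type*} [Field K] [AddCommGroup M] [Module K M]

theorem iSup_eigenspace_eq_ker_aeval_prod (f : Module.End K M) (s : Finset K) :
    ⨆ μ ∈ s, f.eigenspace μ = LinearMap.ker (aeval f (∏ μ ∈ s, (X - C μ))) := by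
  classical
  induction s using Finset.induction_on with
  | empty => simp [one_eq_id]
  | insert a s ha ih =>
    have hcop : IsCoprime (X - C a) (∏ μ ∈ s, (X - C μ)) :=
      IsCoprime.prod_right fun μ hμ ↦ isCoprime_X_sub_C_of_isUnit_sub
        (sub_ne_zero.mpr (ne_of_mem_of_not_mem hμ ha).symm).isUnit
    rw [Finset.iSup_insert, Finset.prod_insert ha,
      ← sup_ker_aeval_eq_ker_aeval_mul_of_coprime f hcop, ih, eigenspace_def]
    simp [Algebra.algebraMap_eq_smul_one]

theorem iSup_eigenspace_eq_top_iff (f : Module.End K M) (s : Finset K) :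
    ⨆ μ ∈ s, f.eigenspace μ = ⊤ ↔ aeval f (∏ μ ∈ s, (X - C μ)) = 0 := by
  rw [iSup_eigenspace_eq_ker_aeval_prod, LinearMap.ker_eq_top]

theorem eigenspace_eq_bot_of_iSup_eigenspace_eq_top {f : Module.End K M} {s : Finset K}
    (hf : ⨆ μ ∈ s, f.eigenspace μ = ⊤) {a : K} (ha : a ∉ s) : f.eigenspace a = ⊥ := by
  simpa [hf] using (eigenspaces_iSupIndep f).disjoint_biSup (y := (s : Set K)) ha

theorem iSup_eigenspace_sub_eq_top_of_commute [FiniteDimensional K M] {f g : Module.End K M}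
    (hfg : Commute f g) {s t u : Finset K} (hf : ⨆ a ∈ s, f.eigenspace a = ⊤)
    (hg : ⨆ b ∈ t, g.eigenspace b = ⊤) (hstu : ∀ a ∈ s, ∀ b ∈ t, a - b ∈ u) :
    ⨆ c ∈ u, (f - g).eigenspace c = ⊤ := by
  have hf' : ⨆ a, f.eigenspace a = ⊤ := top_le_iff.mp (hf ▸ iSup₂_le fun a _ ↦ le_iSup _ a)
  have hg' : ⨆ b, g.eigenspace b = ⊤ := top_le_iff.mp (hg ▸ iSup₂_le fun b _ ↦ le_iSup _ b)
  rw [eq_top_iff, ← hf']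
  refine iSup_le fun a ↦ ?_
  rw [← inf_top_eq (f.eigenspace a), ← hg',
    Submodule.inf_iSup_genEigenspace (mapsTo_genEigenspace_of_comm hfg a 1)]
  refine iSup_le fun b ↦ ?_
  by_cases ha : a ∈ s
  · by_cases hb : b ∈ t
    · refine le_trans (fun v hv ↦ ?_) (le_biSup _ (hstu a ha b hb))
      obtain ⟨hva, hvb⟩ := Submodule.mem_inf.mp hv
      rw [mem_eigenspace_iff] at hva hvb ⊢
      rw [LinearMap.sub_apply, hva, hvb, sub_smul]
    · simp [eigenspace_eq_bot_of_iSup_eigenspace_eq_top hg hb]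
  · simp [eigenspace_eq_bot_of_iSup_eigenspace_eq_top hf ha]

theorem exists_linearMap_pow_apply_pow_apply (f : Module.End K M) (a : M) :
    ∃ P : M →ₗ[K] Module.End K M, ∀ i j : ℕ, P ((f ^ i) a) ((f ^ j) a) = (f ^ (i + j)) a := by
  set ev : K[X] →ₗ[K] M := LinearMap.applyₗ a ∘ₗ (aeval f).toLinearMap
  obtain ⟨π, hπ⟩ := LinearMap.exists_extend (LinearMap.id : LinearMap.range ev →ₗ[K] _)
  -- `σ` is a linear section of `p ↦ p(f) a` over its range.
  obtain ⟨σ, hσ⟩ := Module.projective_lifting_property ev.rangeRestrict π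
    ev.surjective_rangeRestrict
  refine ⟨(aeval f).toLinearMap ∘ₗ σ, fun i j ↦ ?_⟩
  have hsec : aeval f (σ ((f ^ i) a)) a = (f ^ i) a := by
    have hmem : (f ^ i) a ∈ LinearMap.range ev := ⟨X ^ i, by simp [ev]⟩
    have hπa : π ((f ^ i) a) = ⟨_, hmem⟩ := congr($hπ ⟨_, hmem⟩)
    simpa [ev, hπa] using congr(Subtype.val ($hσ ((f ^ i) a)))
  calc aeval f (σ ((f ^ i) a)) ((f ^ j) a)
      = (aeval f (σ ((f ^ i) a) * X ^ j)) a := by simp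
    _ = (f ^ j) (aeval f (σ ((f ^ i) a)) a) := by rw [mul_comm]; simp
    _ = (f ^ (i + j)) a := by rw [hsec, add_comm, pow_add, Module.End.mul_apply]

end Module.End

section Algebra

open Polynomial Module.End

variable {K A : Type*} [Field K] [Ring A] [Algebra K A]

theorem aeval_mulLeft (x : A) (p : K[X]) :
    aeval (LinearMap.mulLeft K x) p = LinearMap.mulLeft K (aeval x p) :=
  aeval_algHom_apply (Algebra.lmul K A) x p

theorem aeval_mulRight (x : A) (p : K[X]) :
    aeval (LinearMap.mulRight K x) p = LinearMap.mulRight K (aeval x p) := by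
  induction p using Polynomial.induction_on' with
  | add p q hp hq => ext; simp [hp, hq, mul_add]
  | monomial n c =>
    ext y
    simp [LinearMap.pow_mulRight, ← Algebra.commutes c y, Algebra.smul_def, mul_assoc]

theorem iSup_eigenspace_mulLeft_sub_mulRight_eq_top [FiniteDimensional K A] {x : A}
    {s u : Finset K} (hx : aeval x (∏ μ ∈ s, (X - C μ)) = 0)
    (hsu : ∀ a ∈ s, ∀ b ∈ s, a - b ∈ u) :
    ⨆ c ∈ u, eigenspace (LinearMap.mulLeft K x - LinearMap.mulRight K x) c = ⊤ := by
  refine iSup_eigenspace_sub_eq_top_of_commute (LinearMap.commute_mulLeft_right x x) ?_ ?_ hsu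
  · rw [iSup_eigenspace_eq_top_iff, aeval_mulLeft, hx, LinearMap.mulLeft_zero_eq_zero]
  · rw [iSup_eigenspace_eq_top_iff, aeval_mulRight, hx, LinearMap.mulRight_zero_eq_zero]

end Algebra

namespace LinearMap.BilinForm

variable {K V W : Type*} [Field K] [AddCommGroup V] [Module K V] [AddCommGroup W] [Module K W]

theorem exists_linearMap_smulRight_eq [FiniteDimensional K V] {Ω : LinearMap.BilinForm K V}
    (hΩ : Ω.Nondegenerate) (P : V →ₗ[K] V →ₗ[K] W) :
    ∃ C : Module.End K V →ₗ[K] W, ∀ u v, C ((Ω u).smulRight v) = P u v := by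
  refine ⟨TensorProduct.lift (P ∘ₗ (Ω.toDual hΩ).symm.toLinearMap) ∘ₗ
    (dualTensorHomEquiv K V V).symm.toLinearMap, fun u v ↦ ?_⟩
  have h : (Ω u).smulRight v = dualTensorHomEquiv K V V (Ω u ⊗ₜ v) := rfl
  have h' : (Ω.toDual hΩ).symm (Ω u) = u := (LinearEquiv.symm_apply_eq _).mpr rfl
  simp [h, h']

variable (Ω : LinearMap.BilinForm K V)

/-- The image of `u v ∈ Sym² V` under the isomorphism `Sym² V ≃ 𝔰𝔭(V, Ω)`. -/
def symProd (u v : V) : Module.End K V := (Ω u).smulRight v + (Ω v).smulRight u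

@[simp]
theorem symProd_apply (u v w : V) : Ω.symProd u v w = Ω u w • v + Ω v w • u := rfl

@[simp]
theorem symProd_zero_right (u : V) : Ω.symProd u 0 = 0 := by ext; simp

theorem symProd_sub_left (u u' v : V) :
    Ω.symProd (u - u') v = Ω.symProd u v - Ω.symProd u' v := by
  ext; simp only [symProd_apply, map_sub, LinearMap.sub_apply]; module

variable {Ω}

theorem symProd_mem_skewAdjointLieSubalgebra (hΩ : LinearMap.IsAlt Ω) (u v : V) :
    Ω.symProd u v ∈ skewAdjointLieSubalgebra Ω := by
  refine (LinearMap.mem_skewAdjointSubmodule _).mpr fun x y ↦ ?_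
  simp only [symProd_apply, map_add, map_smul, LinearMap.add_apply, LinearMap.smul_apply,
    smul_eq_mul, Pi.neg_apply, map_neg]
  rw [← hΩ.neg x v, ← hΩ.neg x u]
  ring

theorem mulLeft_sub_mulRight_symProd {X : Module.End K V}
    (hX : X ∈ skewAdjointLieSubalgebra Ω) (u v : V) :
    (LinearMap.mulLeft K X - LinearMap.mulRight K X) (Ω.symProd u v) =
      Ω.symProd (X u) v + Ω.symProd u (X v) := by
  have hskew : ∀ w z, Ω w (X z) = -Ω (X w) z := fun w z ↦ by
    have := (LinearMap.mem_skewAdjointSubmodule X).mp hX w z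
    simp only [Pi.neg_apply, map_neg] at this
    linear_combination this
  ext w
  simp only [LinearMap.sub_apply, LinearMap.mulLeft_apply, LinearMap.mulRight_apply,
    Module.End.mul_apply, LinearMap.add_apply, symProd_apply, map_add, map_smul, hskew]
  module

theorem eq_zero_of_symProd_eq_zero [NeZero (2 : K)] (hΩ : Ω.SeparatingLeft) {u v : V}
    (hv : v ≠ 0) (h : Ω.symProd u v = 0) : u = 0 := by
  obtain ⟨w, hw⟩ : ∃ w, Ω v w ≠ 0 := by
    by_contra! hw
    exact hv (hΩ v hw)
  have h1 : Ω u w • v + Ω v w • u = 0 := by simpa using congr($h w)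
  have h2 : (2 * Ω u w) * Ω v w = 0 := by
    have := congr(Ω $h1 w)
    simp only [map_add, map_smul, LinearMap.add_apply, LinearMap.smul_apply, smul_eq_mul,
      map_zero, LinearMap.zero_apply] at this
    linear_combination this
  have h3 : Ω u w = 0 := by simpa [hw, two_ne_zero] using h2
  simpa [h3, hw] using h1

theorem exists_linearMap_symProd_pow_apply [FiniteDimensional K V] (hΩ : Ω.Nondegenerate)
    (X : Module.End K V) (a : V) :
    ∃ C : Module.End K V →ₗ[K] V, ∀ i j : ℕ,
      C (Ω.symProd ((X ^ i) a) ((X ^ j) a)) = (2 : K) • (X ^ (i + j)) a := by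
  obtain ⟨P, hP⟩ := X.exists_linearMap_pow_apply_pow_apply a
  obtain ⟨C, hC⟩ := exists_linearMap_smulRight_eq hΩ P
  refine ⟨C, fun i j ↦ ?_⟩
  rw [symProd, map_add, hC, hC, hP, hP, add_comm j i, two_smul]

theorem exists_linearMap_mulLeft_sub_mulRight_pow_symProd [FiniteDimensional K V] (hΩ : Ω.Nondegenerate)
    {X : Module.End K V} (hX : X ∈ skewAdjointLieSubalgebra Ω) (a : V) :
    ∃ C : Module.End K V →ₗ[K] V, ∀ n : ℕ,
      C (((LinearMap.mulLeft K X - LinearMap.mulRight K X) ^ n) (Ω.symProd a a)) =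
        (2 : K) ^ (n + 1) • (X ^ n) a := by
  obtain ⟨C, hC⟩ := exists_linearMap_symProd_pow_apply hΩ X a
  suffices h : ∀ n i j : ℕ, C (((LinearMap.mulLeft K X - LinearMap.mulRight K X) ^ n)
      (Ω.symProd ((X ^ i) a) ((X ^ j) a))) = (2 : K) ^ (n + 1) • (X ^ (n + i + j)) a from
    ⟨C, fun n ↦ by simpa using h n 0 0⟩
  intro n
  induction n with
  | zero => simp [hC]
  | succ n ih =>
    intro i j
    rw [pow_succ, Module.End.mul_apply, mulLeft_sub_mulRight_symProd hX,
      ← Module.End.mul_apply X, ← Module.End.mul_apply X, ← pow_succ', ← pow_succ', map_add,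
      map_add, ih, ih, show n + (i + 1) + j = n + 1 + i + j by ring,
      show n + i + (j + 1) = n + 1 + i + j by ring, ← add_smul, pow_succ _ (n + 1), mul_two]

end LinearMap.BilinForm

section LieSubalgebra

open Polynomial Module.End

variable {K : Type*} [Field K]

theorem LieSubalgebra.aeval_ad_apply_eq_zero_of_iSup_eigenspace_eq_top {L : Type*} [LieRing L]
    [LieAlgebra K L] {L' : LieSubalgebra K L} (x : L') {s : Finset K}
    (h : ⨆ μ ∈ s, eigenspace (LieAlgebra.ad K L' x : Module.End K L') μ = ⊤) {y : L}
    (hy : y ∈ L') : aeval (LieAlgebra.ad K L x) (∏ μ ∈ s, (X - C μ)) y = 0 := by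
  rw [← LinearMap.mem_ker, ← iSup_eigenspace_eq_ker_aeval_prod]
  have hmap : (⊤ : Submodule K L').map L'.incl.toLinearMap ≤
      ⨆ μ ∈ s, eigenspace (LieAlgebra.ad K L x) μ := by
    rw [← h]
    simp only [Submodule.map_iSup]
    refine iSup₂_mono fun μ _ ↦ Submodule.map_le_iff_le_comap.mpr fun z hz ↦ ?_
    rw [mem_eigenspace_iff] at hz
    simpa [mem_eigenspace_iff] using congr(Subtype.val $hz)
  exact hmap ⟨⟨y, hy⟩, trivial, rfl⟩

attribute [local instance] LieRing.ofAssociativeRing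

theorem LieSubalgebra.mulLeft_sub_mulRight_pow_three_apply [CharZero K] {A : Type*} [Ring A]
    [Algebra K A] {L' : LieSubalgebra K A} (x : L')
    (hx : eigenspace (LieAlgebra.ad K L' x : Module.End K L') (-1) ⊔
      eigenspace (LieAlgebra.ad K L' x : Module.End K L') 0 ⊔
      eigenspace (LieAlgebra.ad K L' x : Module.End K L') 1 = ⊤) {y : A} (hy : y ∈ L') :
    ((LinearMap.mulLeft K (x : A) - LinearMap.mulRight K (x : A)) ^ 3) y =
      (LinearMap.mulLeft K (x : A) - LinearMap.mulRight K (x : A)) y := by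
  classical
  have h := aeval_ad_apply_eq_zero_of_iSup_eigenspace_eq_top x (s := {-1, 0, 1})
    (by simpa only [Finset.iSup_insert, Finset.iSup_singleton, sup_assoc] using hx) hy
  have hQ : ∏ ν ∈ ({-1, 0, 1} : Finset K), (X - C ν) = X ^ 3 - X := by
    rw [Finset.prod_insert (by norm_num), Finset.prod_insert (by norm_num),
      Finset.prod_singleton]
    simp only [map_neg, map_one, map_zero]
    ring
  rw [hQ, LieAlgebra.ad_eq_lmul_left_sub_lmul_right] at h
  simpa [sub_eq_zero] using h

end LieSubalgebra

section ThreeGrading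

open Polynomial Module.End LinearMap.BilinForm

variable {K V : Type*} [Field K] [CharZero K] [AddCommGroup V] [Module K V]
  {Ω : LinearMap.BilinForm K V} {X : Module.End K V}

theorem four_smul_pow_three_apply [FiniteDimensional K V] (hΩ : Ω.Nondegenerate)
    (hX : X ∈ skewAdjointLieSubalgebra Ω)
    (hcube : ∀ u v, ((LinearMap.mulLeft K X - LinearMap.mulRight K X) ^ 3) (Ω.symProd u v) =
      (LinearMap.mulLeft K X - LinearMap.mulRight K X) (Ω.symProd u v)) (a : V) :
    (4 : K) • (X ^ 3) a = X a := by
  obtain ⟨C, hC⟩ := exists_linearMap_mulLeft_sub_mulRight_pow_symProd hΩ hX a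
  have h1 : C ((LinearMap.mulLeft K X - LinearMap.mulRight K X) (Ω.symProd a a)) =
      (2 : K) ^ (1 + 1) • X a := by
    simpa only [pow_one] using hC 1
  have h := congr(C $(hcube a a))
  rw [hC 3, h1] at h
  calc (4 : K) • (X ^ 3) a = (4 : K)⁻¹ • (2 : K) ^ (3 + 1) • (X ^ 3) a := by
        rw [smul_smul]; norm_num
    _ = X a := by rw [h, smul_smul]; norm_num

theorem injective_of_pow_three_symProd (hΩ : Ω.SeparatingLeft)
    (hX : X ∈ skewAdjointLieSubalgebra Ω) (hX0 : X ≠ 0)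
    (hcube : ∀ u v, ((LinearMap.mulLeft K X - LinearMap.mulRight K X) ^ 3) (Ω.symProd u v) =
      (LinearMap.mulLeft K X - LinearMap.mulRight K X) (Ω.symProd u v))
    (h4 : ∀ a, (4 : K) • (X ^ 3) a = X a) : Function.Injective X := by
  rw [← LinearMap.ker_eq_bot, Submodule.eq_bot_iff]
  intro b hb
  by_contra hb0
  refine hX0 (LinearMap.ext fun a ↦ ?_)
  have h3 : (X ^ 3) a = X a := by
    have h := hcube a b
    simp only [pow_succ, pow_zero, one_mul, Module.End.mul_apply, mulLeft_sub_mulRight_symProd hX,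
      LinearMap.mem_ker.mp hb, symProd_zero_right, add_zero] at h
    rw [← sub_eq_zero, ← symProd_sub_left] at h
    simpa [pow_succ, sub_eq_zero] using eq_zero_of_symProd_eq_zero hΩ hb0 h
  have h3a : (3 : K) • X a = 0 := by
    have := h4 a
    rw [h3] at this
    linear_combination (norm := module) this
  simpa using h3a

theorem eigenspace_neg_half_sup_eigenspace_half_eq_top [FiniteDimensional K V]
    (hΩ : LinearMap.IsAlt Ω) (hΩsep : Ω.SeparatingLeft) (hX : X ∈ skewAdjointLieSubalgebra Ω)
    (hX0 : X ≠ 0)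
    (hgr : eigenspace (LieAlgebra.ad K (skewAdjointLieSubalgebra Ω) ⟨X, hX⟩ :
        Module.End K (skewAdjointLieSubalgebra Ω)) (-1) ⊔
      eigenspace (LieAlgebra.ad K (skewAdjointLieSubalgebra Ω) ⟨X, hX⟩ :
        Module.End K (skewAdjointLieSubalgebra Ω)) 0 ⊔
      eigenspace (LieAlgebra.ad K (skewAdjointLieSubalgebra Ω) ⟨X, hX⟩ :
        Module.End K (skewAdjointLieSubalgebra Ω)) 1 = ⊤) :
    eigenspace X (-(1 : K) / 2) ⊔ eigenspace X (1 / 2) = ⊤ := by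
  classical
  have hΩnd : Ω.Nondegenerate := hΩ.isRefl.nondegenerate_iff_separatingLeft.mpr hΩsep
  have hcube : ∀ u v, ((LinearMap.mulLeft K X - LinearMap.mulRight K X) ^ 3) (Ω.symProd u v) =
      (LinearMap.mulLeft K X - LinearMap.mulRight K X) (Ω.symProd u v) := fun u v ↦
    LieSubalgebra.mulLeft_sub_mulRight_pow_three_apply ⟨X, hX⟩ hgr
      (symProd_mem_skewAdjointLieSubalgebra hΩ u v)
  have h4 := four_smul_pow_three_apply hΩnd hX hcube
  have hinj := injective_of_pow_three_symProd hΩsep hX hX0 hcube h4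
  have hsq : ∀ a, (4 : K) • (X ^ 2) a = a := fun a ↦
    hinj (by rw [map_smul, ← Module.End.mul_apply, ← pow_succ', h4])
  have htop := (iSup_eigenspace_eq_top_iff X {-(1 : K) / 2, 1 / 2}).mpr <| by
    rw [Finset.prod_insert (by norm_num), Finset.prod_singleton]
    ext a
    have := hsq a
    rw [sq, Module.End.mul_apply] at this
    simp only [map_mul, map_sub, aeval_X, aeval_C, Module.End.mul_apply, LinearMap.sub_apply,
      Module.algebraMap_end_apply, map_smul, LinearMap.zero_apply]
    linear_combination (norm := module) (1 / 4 : K) • this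
  simpa only [Finset.iSup_insert, Finset.iSup_singleton] using htop

end ThreeGrading

/-- (Forward) If `X ∈ End(V)` is diagonalizable with eigenvalues in
`{-1/2, 0, 1/2}`, then `ad X = [X, ·]` on `End(V)` is diagonalizable with eigenvalues in
`{-1, -1/2, 0, 1/2, 1}`.  (Converse) If `X ∈ 𝔰𝔭(V, Ω)` is nonzero and `ad X` induces a
3-grading on `𝔰𝔭(V, Ω)` with eigenvalues `{-1, 0, 1}`, then `X` is diagonalizable on `V`
with eigenvalues `±1/2`. -/
theorem eigenvalue_halves_and_ad_three_grading
    (K : Type*) [Field K] [CharZero K]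
    (V : Type*) [AddCommGroup V] [Module K V] [FiniteDimensional K V] :
    (∀ X : Module.End K V,
      Module.End.eigenspace X (-(1 : K)/2) ⊔ Module.End.eigenspace X 0 ⊔
          Module.End.eigenspace X (1/2) = ⊤ →
      Module.End.eigenspace (LinearMap.mulLeft K X - LinearMap.mulRight K X) (-1) ⊔
        Module.End.eigenspace (LinearMap.mulLeft K X - LinearMap.mulRight K X)
          (-(1 : K)/2) ⊔
        Module.End.eigenspace (LinearMap.mulLeft K X - LinearMap.mulRight K X) 0 ⊔
        Module.End.eigenspace (LinearMap.mulLeft K X - LinearMap.mulRight K X) (1/2) ⊔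
        Module.End.eigenspace (LinearMap.mulLeft K X - LinearMap.mulRight K X) 1 = ⊤) ∧
    (∀ (Ω : LinearMap.BilinForm K V),
      (∀ v : V, Ω v v = 0) → (∀ v : V, (∀ w : V, Ω v w = 0) → v = 0) →
      ∀ (X : Module.End K V) (hX : X ∈ skewAdjointLieSubalgebra Ω), X ≠ 0 →
      (Module.End.eigenspace
          ((LieAlgebra.ad K ↥(skewAdjointLieSubalgebra Ω) ⟨X, hX⟩ :
            Module.End K ↥(skewAdjointLieSubalgebra Ω))) (-1) ⊔
        Module.End.eigenspace
          ((LieAlgebra.ad K ↥(skewAdjointLieSubalgebra Ω) ⟨X, hX⟩ :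
            Module.End K ↥(skewAdjointLieSubalgebra Ω))) 0 ⊔
        Module.End.eigenspace
          ((LieAlgebra.ad K ↥(skewAdjointLieSubalgebra Ω) ⟨X, hX⟩ :
            Module.End K ↥(skewAdjointLieSubalgebra Ω))) 1 = ⊤) →
      Module.End.eigenspace X (-(1 : K)/2) ⊔ Module.End.eigenspace X (1/2) = ⊤) := by
  classical
  refine ⟨fun X hX ↦ ?_, fun Ω hΩ hΩsep X hX hX0 hgr ↦
    eigenspace_neg_half_sup_eigenspace_half_eq_top hΩ hΩsep hX hX0 hgr⟩
  have hQ : Polynomial.aeval X (∏ μ ∈ ({-(1 : K) / 2, 0, 1 / 2} : Finset K),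
      (Polynomial.X - Polynomial.C μ)) = 0 := by
    rw [← Module.End.iSup_eigenspace_eq_top_iff]
    simpa only [Finset.iSup_insert, Finset.iSup_singleton, sup_assoc] using hX
  have hdiff : ∀ a ∈ ({-(1 : K) / 2, 0, 1 / 2} : Finset K),
      ∀ b ∈ ({-(1 : K) / 2, 0, 1 / 2} : Finset K),
        a - b ∈ ({-1, -(1 : K) / 2, 0, 1 / 2, 1} : Finset K) := by
    simp only [Finset.mem_insert, Finset.mem_singleton]
    rintro a (rfl | rfl | rfl) b (rfl | rfl | rfl) <;> norm_num
  simpa only [Finset.iSup_insert, Finset.iSup_singleton, sup_assoc] using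
    iSup_eigenspace_mulLeft_sub_mulRight_eq_top hQ hdiff
end
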